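/- Let q be a prime power and let 0 < d < k be integers with R := k + d − 1 ≤ q. Let α_1, …, α_R ∈ 𝔽_q be pairwise distinct, and let f ∈ 𝔽_q[x] be an irreducible polynomial of degree k. Let V ∈ 𝔽_q^{k×R} be a matrix of rank k such that V · (f(α_1)μ(α_1), …, f(α_R)μ(α_R))ᵀ = 0 for every polynomial μ ∈ 𝔽_q[x] of degree < d − 1, and let W ∈ 𝔽_q^{d×R} be a matrix of rank d whose row space equals {(λ(α_1), …, λ(α_R)) : λ ∈ 𝔽_q[x], deg λ < d}. Then for every non-zero polynomial g ∈ 𝔽_q[x] of degree < k, setting c = (g(α_1), …, g(α_R)), the matrix V · diag(c) · Wᵀ ∈ 𝔽_q^{k×d} has rank ≥ d. Consequently, {V·diag((g(α_i))_i)·Wᵀ : g ∈ 𝔽_q[x], deg g < k} is a k-dimensional rank-metric code in 𝔽_q^{k×d} with minimum rank distance d and tensor rank k + d − 1, i.e., an MTR code. -/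

import Mathlib

open Matrix Polynomial

/-! If `x` lies in the kernel of `V diag(g(α)) Wᵀ`, then `Wᵀ x = λ(α)` for some `λ` of degree
`< d` and `g(α) λ(α)` lies in the kernel of `V`, which by a dimension count is the Cauchy code:
`g(α) λ(α) = f(α) μ(α)`. Both sides have degree `< R`, so `g λ = f μ`, and since the irreducible
`f` has larger degree than `g` and `λ`, this forces `λ = 0`, hence `x = 0`. So every nonzero
codeword has rank `d` and the code has dimension `k`. Writing `V diag(c) Wᵀ = ∑ᵢ cᵢ vᵢ wᵢᵀ`
(columns `vᵢ`, `wᵢ`) puts the code in the span of `R` rank-one matrices, and `R = k + d - 1`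
meets the general lower bound `dim C + d(C) - 1` on the tensor rank. -/

/-- The minimum (rank) distance of a rank-metric code. -/
noncomputable def minRankDist {F : Type*} [Field F] {n m : ℕ}
    (C : Submodule F (Matrix (Fin n) (Fin m) F)) : ℕ :=
  sInf {r : ℕ | ∃ M ∈ C, M ≠ 0 ∧ M.rank = r}

/-- The tensor rank of a rank-metric code `C`: the least `R` such that `C` is
contained in the span of `R` rank-one matrices. -/
noncomputable def trkCode {F : Type*} [Field F] {n m : ℕ}
    (C : Submodule F (Matrix (Fin n) (Fin m) F)) : ℕ :=
  sInf {R : ℕ | ∃ A : Fin R → Matrix (Fin n) (Fin m) F,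
    (∀ r, (A r).rank = 1) ∧ C ≤ Submodule.span F (Set.range A)}

theorem LinearMap.finrank_range_le_of_ker_le {K V V₁ V₂ : Type*} [Field K] [AddCommGroup V]
    [Module K V] [FiniteDimensional K V] [AddCommGroup V₁] [Module K V₁] [AddCommGroup V₂]
    [Module K V₂] {σ : V →ₗ[K] V₁} {π : V →ₗ[K] V₂} (h : ker π ≤ ker σ) :
    Module.finrank K (range σ) ≤ Module.finrank K (range π) := by
  have hσ := σ.finrank_range_add_finrank_ker
  have hπ := π.finrank_range_add_finrank_ker
  have := Submodule.finrank_mono h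
  omega

namespace Matrix

variable {F : Type*} [Field F] {m n ι : Type*}

section Rank

variable [Fintype n]

theorem rank_eq_zero_iff {A : Matrix m n F} : A.rank = 0 ↔ A = 0 := by
  classical
  rw [rank, Submodule.finrank_eq_zero, LinearMap.range_eq_bot, ← toLin'_apply',
    LinearEquiv.map_eq_zero_iff]

theorem rank_smul_le (c : F) (A : Matrix m n F) : (c • A).rank ≤ A.rank := by
  rcases eq_or_ne c 0 with rfl | hc
  · simp
  · exact (rank_smul_of_mem_nonZeroDivisors A (mem_nonZeroDivisors_of_ne_zero hc)).le

theorem rank_add_le (A B : Matrix m n F) : (A + B).rank ≤ A.rank + B.rank := by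
  refine (Submodule.finrank_mono ?_).trans (Submodule.finrank_add_le_finrank_add_finrank _ _)
  rintro _ ⟨x, rfl⟩
  rw [mulVecLin_apply, add_mulVec]
  exact Submodule.add_mem_sup (LinearMap.mem_range_self _ x) (LinearMap.mem_range_self _ x)

theorem rank_sum_le (s : Finset ι) (A : ι → Matrix m n F) :
    (∑ i ∈ s, A i).rank ≤ ∑ i ∈ s, (A i).rank :=
  Finset.le_sum_of_subadditive (rank : Matrix m n F → ℕ) rank_zero.le rank_add_le s A

theorem rank_sum_smul_le_card [Fintype ι] {A : ι → Matrix m n F} (hA : ∀ i, (A i).rank ≤ 1)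
    {c : ι → F} {s : Finset ι} (hc : ∀ i ∉ s, c i = 0) : (∑ i, c i • A i).rank ≤ s.card := by
  rw [← Finset.sum_subset s.subset_univ fun i _ hi => by rw [hc i hi, zero_smul]]
  calc (∑ i ∈ s, c i • A i).rank ≤ ∑ i ∈ s, (c i • A i).rank := rank_sum_le s _
    _ ≤ ∑ _i ∈ s, 1 := Finset.sum_le_sum fun i _ => (rank_smul_le _ _).trans (hA i)
    _ = s.card := by simp

theorem rank_vecMulVec_eq_one {u : m → F} {v : n → F} (hu : u ≠ 0) (hv : v ≠ 0) :
    (vecMulVec u v).rank = 1 := by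
  refine le_antisymm (rank_vecMulVec_le u v) (Nat.one_le_iff_ne_zero.mpr ?_)
  rw [Ne, rank_eq_zero_iff]
  obtain ⟨a, ha⟩ := Function.ne_iff.mp hu
  obtain ⟨b, hb⟩ := Function.ne_iff.mp hv
  exact fun h => mul_ne_zero ha hb (congrFun₂ h a b)

theorem vecMul_injective_of_rank_eq [Fintype m] {W : Matrix m n F}
    (hW : W.rank = Fintype.card m) : Function.Injective (· ᵥ* W) := by
  rw [vecMul_injective_iff, linearIndependent_iff_card_eq_finrank_span, Set.finrank,
    ← rank_eq_finrank_span_row, hW]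

end Rank

theorem mul_diagonal_mul_transpose_eq_sum [Fintype ι] [DecidableEq ι] (V : Matrix m ι F)
    (W : Matrix n ι F) (c : ι → F) :
    V * diagonal c * Wᵀ = ∑ i, c i • vecMulVec (V.col i) (W.col i) := by
  ext a b
  rw [mul_apply]
  simp only [mul_diagonal, transpose_apply, sum_apply, smul_apply, vecMulVec_apply, col_apply,
    smul_eq_mul]
  exact Finset.sum_congr rfl fun i _ => by ring

theorem col_ne_zero_of_mem_span_row {W : Matrix m n F} {v : n → F}
    (hv : v ∈ Submodule.span F (Set.range W)) {i : n} (hvi : v i ≠ 0) : W.col i ≠ 0 := by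
  intro hcol
  have : Submodule.span F (Set.range W) ≤ LinearMap.ker (LinearMap.proj i) := by
    rw [Submodule.span_le]
    rintro _ ⟨a, rfl⟩
    exact congrFun hcol a
  exact hvi (this hv)

end Matrix

section RankMetricCode

variable {F : Type*} [Field F]

/-- The tensor-rank analogue of the Singleton bound, `dim C + d(C) - 1 ≤ trk C`. -/
theorem finrank_add_le_of_le_span_rankOne {m n ι : Type*} [Fintype n] [Fintype ι]
    {C : Submodule F (Matrix m n F)} (hC : C ≠ ⊥) {δ : ℕ} (hδ : ∀ M ∈ C, M ≠ 0 → δ ≤ M.rank)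
    {A : ι → Matrix m n F} (hA : ∀ i, (A i).rank ≤ 1)
    (hCA : C ≤ Submodule.span F (Set.range A)) :
    Module.finrank F C + δ ≤ Fintype.card ι + 1 := by
  classical
  set σ := Fintype.linearCombination F A
  have hCσ : C ≤ LinearMap.range σ := (Fintype.range_linearCombination F A).symm ▸ hCA
  have hδι : δ ≤ Fintype.card ι := by
    obtain ⟨M, hMC, hM0⟩ := Submodule.exists_mem_ne_zero_of_ne_bot hC
    obtain ⟨c, rfl⟩ := hCσ hMC
    exact (hδ _ hMC hM0).trans (rank_sum_smul_le_card hA (s := Finset.univ) (by simp))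
  -- Coefficients supported on `δ - 1` positions give a codeword of rank `< δ`, i.e. zero;
  -- so the remaining `card ι - (δ - 1)` coefficients determine the codeword.
  obtain ⟨s, -, hs⟩ := Finset.exists_subset_card_eq (s := (Finset.univ : Finset ι))
    (n := δ - 1) (by rw [Finset.card_univ]; omega)
  let P := C.comap σ
  let π := LinearMap.funLeft F F (Subtype.val : (sᶜ : Finset ι) → ι)
  have hker : LinearMap.ker (π.domRestrict P) ≤ LinearMap.ker (σ.domRestrict P) := by
    rintro ⟨c, hcP⟩ hc
    have hcs : ∀ i ∉ s, c i = 0 := fun i hi => congrFun hc ⟨i, Finset.mem_compl.mpr hi⟩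
    change σ c = 0
    by_contra h
    have hlow := hδ _ hcP h
    have hup : (σ c).rank ≤ s.card := rank_sum_smul_le_card hA hcs
    have hpos := Nat.pos_of_ne_zero (rank_eq_zero_iff.not.mpr h)
    omega
  have hCrange : C ≤ LinearMap.range (σ.domRestrict P) := by
    intro M hM
    obtain ⟨c, rfl⟩ := hCσ hM
    exact ⟨⟨c, hM⟩, rfl⟩
  calc Module.finrank F C + δ
      ≤ Module.finrank F (LinearMap.range (σ.domRestrict P)) + δ := by
        gcongr; exact Submodule.finrank_mono hCrange
    _ ≤ Module.finrank F (LinearMap.range (π.domRestrict P)) + δ := by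
        gcongr; exact LinearMap.finrank_range_le_of_ker_le hker
    _ ≤ Module.finrank F ((sᶜ : Finset ι) → F) + δ := by
        gcongr; exact Submodule.finrank_le _
    _ ≤ Fintype.card ι + 1 := by
        rw [Module.finrank_fintype_fun_eq_card, Fintype.card_coe, Finset.card_compl, hs]
        omega

variable {k d : ℕ}

theorem minRankDist_eq_of_forall_rank_eq {C : Submodule F (Matrix (Fin k) (Fin d) F)}
    (hC : C ≠ ⊥) {δ : ℕ} (h : ∀ M ∈ C, M ≠ 0 → M.rank = δ) : minRankDist C = δ := by
  obtain ⟨M, hMC, hM0⟩ := Submodule.exists_mem_ne_zero_of_ne_bot hC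
  have : {r : ℕ | ∃ M ∈ C, M ≠ 0 ∧ M.rank = r} = {δ} := by
    ext r
    constructor
    · rintro ⟨M, hMC, hM0, rfl⟩
      exact h M hMC hM0
    · rintro rfl
      exact ⟨M, hMC, hM0, h M hMC hM0⟩
  rw [minRankDist, this, csInf_singleton]

theorem trkCode_eq_of_le_span_rankOne {C : Submodule F (Matrix (Fin k) (Fin d) F)}
    (hC : C ≠ ⊥) {δ : ℕ} (hδ : ∀ M ∈ C, M ≠ 0 → δ ≤ M.rank) {T : ℕ}
    {A : Fin T → Matrix (Fin k) (Fin d) F} (hA : ∀ i, (A i).rank = 1)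
    (hCA : C ≤ Submodule.span F (Set.range A)) (hT : T + 1 = Module.finrank F C + δ) :
    trkCode C = T := by
  refine le_antisymm (Nat.sInf_le ⟨A, hA, hCA⟩) (le_csInf ⟨T, A, hA, hCA⟩ ?_)
  rintro T' ⟨A', hA', hCA'⟩
  have := finrank_add_le_of_le_span_rankOne hC hδ (fun i => (hA' i).le) hCA'
  rw [Fintype.card_fin] at this
  omega

theorem finrank_minRankDist_trkCode_range {E : Type*} [AddCommGroup E] [Module F E]
    (hE : 0 < Module.finrank F E) {L : E →ₗ[F] Matrix (Fin k) (Fin d) F}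
    {δ : ℕ} (hδ : 0 < δ) (hL : ∀ x ≠ 0, (L x).rank = δ) {T : ℕ}
    {A : Fin T → Matrix (Fin k) (Fin d) F} (hA : ∀ i, (A i).rank = 1)
    (hLA : LinearMap.range L ≤ Submodule.span F (Set.range A))
    (hT : T + 1 = Module.finrank F E + δ) :
    Module.finrank F (LinearMap.range L) = Module.finrank F E ∧
      minRankDist (LinearMap.range L) = δ ∧ trkCode (LinearMap.range L) = T := by
  have hinj : Function.Injective L := by
    rw [← LinearMap.ker_eq_bot, LinearMap.ker_eq_bot']
    intro x hx
    by_contra h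
    have := hL x h
    rw [hx, rank_zero] at this
    omega
  have hfin := LinearMap.finrank_range_of_inj hinj
  have hrank : ∀ M ∈ LinearMap.range L, M ≠ 0 → M.rank = δ := by
    rintro _ ⟨x, rfl⟩ hM
    exact hL x (by rintro rfl; exact hM (map_zero L))
  have hne : LinearMap.range L ≠ ⊥ := by
    intro h
    rw [h, finrank_bot] at hfin
    omega
  exact ⟨hfin, minRankDist_eq_of_forall_rank_eq hne hrank,
    trkCode_eq_of_le_span_rankOne hne (fun M hM h => (hrank M hM h).ge) hA hLA (by omega)⟩

end RankMetricCode

section Polynomial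

variable {F : Type*} [Field F]

theorem Polynomial.degree_mul_lt_of_lt {p q : F[X]} {a b : ℕ} (hp : p.degree < a)
    (hq : q.degree < b) : (p * q).degree < (a + b - 1 : ℕ) := by
  rcases eq_or_ne p 0 with rfl | hp0
  · simp
  rcases eq_or_ne q 0 with rfl | hq0
  · simp
  rw [← natDegree_lt_iff_degree_lt hp0] at hp
  rw [← natDegree_lt_iff_degree_lt hq0] at hq
  rw [← natDegree_lt_iff_degree_lt (mul_ne_zero hp0 hq0), natDegree_mul hp0 hq0]
  omega

theorem Polynomial.finrank_degreeLT (n : ℕ) : Module.finrank F F[X]_n = n := by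
  rw [Module.finrank_eq_card_basis (degreeLT.basis F n), Fintype.card_fin]

theorem Irreducible.eq_zero_of_dvd_mul {f g h : F[X]} (hf : Irreducible f) (hfgh : f ∣ g * h)
    (hg : g ≠ 0) (hgf : g.degree < f.degree) (hhf : h.degree < f.degree) : h = 0 := by
  by_contra h0
  rcases hf.prime.dvd_or_dvd hfgh with hfg | hfh
  · exact (degree_le_of_dvd hfg hg).not_gt hgf
  · exact (degree_le_of_dvd hfh h0).not_gt hhf

variable {ι : Type*}

/-- Its range is the Cauchy code `{(f(αᵢ) μ(αᵢ))ᵢ : deg μ < n}`; for `f = 1`, the Reed–Solomon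
code. -/
noncomputable def cauchyEval (f : F[X]) (α : ι → F) (n : ℕ) : F[X]_n →ₗ[F] ι → F :=
  LinearMap.pi fun i => f.eval (α i) • (leval (α i)).comp (degreeLT F n).subtype

@[simp]
theorem cauchyEval_apply (f : F[X]) (α : ι → F) (n : ℕ) (μ : F[X]_n) (i : ι) :
    cauchyEval f α n μ i = f.eval (α i) * (μ : F[X]).eval (α i) :=
  rfl

variable [Fintype ι] {α : ι → F} {f : F[X]}

theorem cauchyEval_injective (hα : Function.Injective α) (hf : ∀ i, f.eval (α i) ≠ 0) {n : ℕ}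
    (hn : n ≤ Fintype.card ι) : Function.Injective (cauchyEval f α n) := by
  rw [← LinearMap.ker_eq_bot, LinearMap.ker_eq_bot']
  intro μ hμ
  refine Subtype.ext (eq_zero_of_degree_lt_of_eval_index_eq_zero Finset.univ hα.injOn ?_ ?_)
  · exact (mem_degreeLT.mp μ.2).trans_le (by simpa using hn)
  · exact fun i _ => (mul_eq_zero.mp (congrFun hμ i)).resolve_left (hf i)

/-- The kernel of `V` has dimension `n` and contains the `n`-dimensional Cauchy code. -/
theorem exists_cauchy_of_mulVec_eq_zero {κ : Type*} [Fintype κ] (hα : Function.Injective α)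
    (hf : ∀ i, f.eval (α i) ≠ 0) {n : ℕ} (hcard : Fintype.card ι = Fintype.card κ + n)
    {V : Matrix κ ι F} (hVrank : V.rank = Fintype.card κ)
    (hV : ∀ μ : F[X], μ.degree < n → V *ᵥ (fun i => f.eval (α i) * μ.eval (α i)) = 0)
    {v : ι → F} (hv : V *ᵥ v = 0) :
    ∃ μ : F[X], μ.degree < n ∧ v = fun i => f.eval (α i) * μ.eval (α i) := by
  have hrange : LinearMap.range (cauchyEval f α n) = LinearMap.ker V.mulVecLin := by
    apply Submodule.eq_of_le_of_finrank_eq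
    · rintro _ ⟨μ, rfl⟩
      exact hV μ (mem_degreeLT.mp μ.2)
    · have := V.mulVecLin.finrank_range_add_finrank_ker
      rw [Module.finrank_fintype_fun_eq_card] at this
      change V.rank + _ = _ at this
      rw [LinearMap.finrank_range_of_inj (cauchyEval_injective hα hf (by omega)),
        finrank_degreeLT]
      omega
  obtain ⟨μ, hμ⟩ := hrange.ge hv
  exact ⟨μ, mem_degreeLT.mp μ.2, hμ.symm⟩

theorem col_ne_zero_of_exists_cauchy {κ : Type*} [DecidableEq ι] (hα : Function.Injective α)
    (hf : ∀ i, f.eval (α i) ≠ 0) {n : ℕ} (hn : n < Fintype.card ι) {V : Matrix κ ι F}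
    (hV : ∀ v, V *ᵥ v = 0 → ∃ μ : F[X], μ.degree < n ∧
      v = fun i => f.eval (α i) * μ.eval (α i))
    (i : ι) : V.col i ≠ 0 := by
  intro hcol
  obtain ⟨μ, hμ, hsingle⟩ := hV (Pi.single i 1) (by rw [mulVec_single_one, hcol])
  have hμ0 : μ = 0 := by
    refine eq_zero_of_degree_lt_of_eval_index_eq_zero (Finset.univ.erase i) hα.injOn ?_ ?_
    · rw [Finset.card_erase_of_mem (Finset.mem_univ i), Finset.card_univ]
      exact hμ.trans_le (by exact_mod_cast (by omega : n ≤ Fintype.card ι - 1))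
    · intro j hj
      have := congrFun hsingle j
      rw [Pi.single_eq_of_ne (Finset.ne_of_mem_erase hj)] at this
      exact (mul_eq_zero.mp this.symm).resolve_left (hf j)
  simpa [hμ0] using congrFun hsingle i

/-- A kernel vector `x` yields `g λ = f μ` with `xᵀ W = λ(α)`, which the irreducible `f`, of
larger degree than `g` and `λ`, only allows for `λ = 0`. -/
theorem rank_mul_diagonal_mul_transpose_eq_card {κ ρ : Type*} [Fintype ρ] [DecidableEq ι]
    (hα : Function.Injective α) (hf : Irreducible f) {m d : ℕ} (hd : d ≤ f.natDegree)
    (hcard : f.natDegree + d - 1 ≤ Fintype.card ι) (hm : f.natDegree + m ≤ Fintype.card ι)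
    {V : Matrix κ ι F} (hV : ∀ v, V *ᵥ v = 0 → ∃ μ : F[X], μ.degree < m ∧
      v = fun i => f.eval (α i) * μ.eval (α i))
    {W : Matrix ρ ι F} (hWinj : Function.Injective (· ᵥ* W))
    (hW : ∀ x, ∃ lam : F[X], lam.degree < d ∧ x ᵥ* W = fun i => lam.eval (α i))
    {g : F[X]} (hg : g ≠ 0) (hgf : g.degree < f.natDegree) :
    (V * diagonal (fun i => g.eval (α i)) * Wᵀ).rank = Fintype.card ρ := by
  have hfdeg : f.degree = f.natDegree := degree_eq_natDegree hf.ne_zero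
  rw [Matrix.rank, LinearMap.finrank_range_of_inj, Module.finrank_fintype_fun_eq_card]
  rw [← LinearMap.ker_eq_bot, LinearMap.ker_eq_bot']
  intro x hx
  obtain ⟨lam, hlam, hxW⟩ := hW x
  obtain ⟨μ, hμ, hgμ⟩ := hV (fun i => g.eval (α i) * lam.eval (α i)) <| by
    rwa [mulVecLin_apply, ← mulVec_mulVec, ← mulVec_mulVec, mulVec_transpose, hxW,
      _root_.funext (mulVec_diagonal _ _)] at hx
  have hdeg : (g * lam - f * μ).degree < Fintype.card ι := by
    refine (degree_sub_le _ _).trans_lt (max_lt ?_ ?_)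
    · exact (degree_mul_lt_of_lt hgf hlam).trans_le (by exact_mod_cast hcard)
    · exact (degree_mul_lt_of_lt (hfdeg.trans_lt (by exact_mod_cast f.natDegree.lt_succ_self))
        hμ).trans_le (by exact_mod_cast (by omega : f.natDegree + 1 + m - 1 ≤ Fintype.card ι))
  have hpoly : g * lam = f * μ := eq_of_degree_sub_lt_of_eval_index_eq Finset.univ hα.injOn
    (by simpa using hdeg) fun i _ => by simpa using congrFun hgμ i
  have hlam0 : lam = 0 := hf.eq_zero_of_dvd_mul ⟨μ, hpoly⟩ hg (hfdeg ▸ hgf)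
    (hfdeg ▸ hlam.trans_le (by exact_mod_cast hd))
  apply hWinj
  simp only [hxW, hlam0, eval_zero, zero_vecMul]
  rfl

theorem finrank_minRankDist_trkCode_of_forall_rank_eq {k d R : ℕ} (hk : 0 < k) (hd : 0 < d)
    (hR : R = k + d - 1) {α : Fin R → F} {V : Matrix (Fin k) (Fin R) F}
    {W : Matrix (Fin d) (Fin R) F} (hVcol : ∀ i, V.col i ≠ 0) (hWcol : ∀ i, W.col i ≠ 0)
    (hrank : ∀ g : F[X], g ≠ 0 → g.degree < k →
      (V * diagonal (fun i => g.eval (α i)) * Wᵀ).rank = d)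
    {C : Submodule F (Matrix (Fin k) (Fin d) F)}
    (hC : (C : Set (Matrix (Fin k) (Fin d) F)) =
      {M | ∃ g : F[X], g.degree < k ∧ M = V * diagonal (fun i => g.eval (α i)) * Wᵀ}) :
    Module.finrank F C = k ∧ minRankDist C = d ∧ trkCode C = k + d - 1 := by
  let A i := vecMulVec (V.col i) (W.col i)
  let L := Fintype.linearCombination F A ∘ₗ cauchyEval 1 α k
  have hL (g : F[X]_k) : L g = V * diagonal (fun i => (g : F[X]).eval (α i)) * Wᵀ := by
    simp [L, A, mul_diagonal_mul_transpose_eq_sum, Fintype.linearCombination_apply]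
  obtain rfl : C = LinearMap.range L := SetLike.coe_injective <| hC.trans <| by
    ext M
    constructor
    · rintro ⟨g, hg, rfl⟩
      exact ⟨⟨g, mem_degreeLT.2 hg⟩, hL _⟩
    · rintro ⟨g, rfl⟩
      exact ⟨g, mem_degreeLT.1 g.2, hL g⟩
  have := finrank_minRankDist_trkCode_range (by rwa [finrank_degreeLT]) hd
    (fun g hg => hL g ▸ hrank g (by simpa using hg) (mem_degreeLT.1 g.2))
    (fun i => rank_vecMulVec_eq_one (hVcol i) (hWcol i))
    ((Fintype.range_linearCombination F A) ▸ LinearMap.range_comp_le_range _ _)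
    (by rw [finrank_degreeLT]; omega)
  rw [finrank_degreeLT] at this
  exact hR ▸ this

end Polynomial

theorem cauchy_MTR_construction_general {F : Type*} [Field F] {k d R : ℕ}
    (hd : 0 < d) (hdk : d < k) (hR : R = k + d - 1)
    (α : Fin R → F) (hα : Function.Injective α)
    (f : Polynomial F) (hf : Irreducible f) (hfdeg : f.natDegree = k)
    (V : Matrix (Fin k) (Fin R) F) (hVrank : V.rank = k)
    (hV : ∀ μ : Polynomial F, μ.degree < ((d - 1 : ℕ) : WithBot ℕ) →
      V.mulVec (fun i => f.eval (α i) * μ.eval (α i)) = 0)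
    (W : Matrix (Fin d) (Fin R) F) (hWrank : W.rank = d)
    (hW : (Submodule.span F (Set.range W) : Set (Fin R → F)) =
      {v | ∃ lam : Polynomial F, lam.degree < (d : ℕ) ∧ v = fun i => lam.eval (α i)}) :
    (∀ g : Polynomial F, g ≠ 0 → g.degree < (k : ℕ) →
      d ≤ (V * Matrix.diagonal (fun i => g.eval (α i)) * Wᵀ).rank) ∧
    (∀ C' : Submodule F (Matrix (Fin k) (Fin d) F),
      (C' : Set (Matrix (Fin k) (Fin d) F)) =
        {M | ∃ g : Polynomial F, g.degree < (k : ℕ) ∧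
          M = V * Matrix.diagonal (fun i => g.eval (α i)) * Wᵀ} →
      Module.finrank F C' = k ∧ minRankDist C' = d ∧ trkCode C' = k + d - 1) := by
  have hroot : ∀ i, f.eval (α i) ≠ 0 := fun i => hf.not_isRoot_of_natDegree_ne_one (by omega)
  have hker := fun v => exists_cauchy_of_mulVec_eq_zero (v := v) hα hroot
    (by simp; omega) (by simpa using hVrank) hV
  have hrow (x : Fin d → F) : ∃ lam : F[X], lam.degree < d ∧ x ᵥ* W = fun i => lam.eval (α i) := by
    have hx : x ᵥ* W ∈ (Submodule.span F (Set.range W) : Set (Fin R → F)) :=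
      range_vecMulLinear W ▸ LinearMap.mem_range_self W.vecMulLinear x
    rwa [hW] at hx
  have hrank : ∀ g : F[X], g ≠ 0 → g.degree < k →
      (V * diagonal (fun i => g.eval (α i)) * Wᵀ).rank = d := fun g hg hgk => by
    simpa using rank_mul_diagonal_mul_transpose_eq_card hα hf (by omega) (by simp; omega)
      (by simp; omega) hker (vecMul_injective_of_rank_eq (by simpa using hWrank)) hrow hg
      (hfdeg ▸ hgk)
  have hone : (fun _ => 1 : Fin R → F) ∈ (Submodule.span F (Set.range W) : Set (Fin R → F)) := by
    rw [hW]
    exact ⟨1, by rw [degree_one]; exact_mod_cast hd, by simp⟩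
  exact ⟨fun g hg hgk => (hrank g hg hgk).ge, fun C' hC' =>
    finrank_minRankDist_trkCode_of_forall_rank_eq (by omega) hd hR
      (col_ne_zero_of_exists_cauchy hα hroot (by simp; omega) hker)
      (fun _ => col_ne_zero_of_mem_span_row hone one_ne_zero) hrank hC'⟩

/-- The Cauchy-code construction of MTR codes (Theorem on extremal triples from
Reed–Solomon/Cauchy codes): with `R = k + d - 1 ≤ q`, pairwise distinct evaluation
points `α_i`, an irreducible `f` of degree `k`, `V` a parity check matrix of the Cauchy
code `{(f(α_i) μ(α_i))_i : deg μ < d - 1}` and `W` a generator matrix of the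
Reed–Solomon code `{(λ(α_i))_i : deg λ < d}`, every `V diag((g(α_i))_i) Wᵀ` with
`g ≠ 0` of degree `< k` has rank at least `d`; consequently the resulting code is a
`k`-dimensional MTR code in `𝔽_q^{k×d}` with minimum distance `d` and tensor rank
`k + d - 1`. -/
theorem cauchy_MTR_construction {F : Type*} [Field F] [Fintype F] {k d R : ℕ}
    (hd : 0 < d) (hdk : d < k) (hR : R = k + d - 1) (hRq : R ≤ Fintype.card F)
    (α : Fin R → F) (hα : Function.Injective α)
    (f : Polynomial F) (hf : Irreducible f) (hfdeg : f.natDegree = k)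
    (V : Matrix (Fin k) (Fin R) F) (hVrank : V.rank = k)
    (hV : ∀ μ : Polynomial F, μ.degree < ((d - 1 : ℕ) : WithBot ℕ) →
      V.mulVec (fun i => f.eval (α i) * μ.eval (α i)) = 0)
    (W : Matrix (Fin d) (Fin R) F) (hWrank : W.rank = d)
    (hW : (Submodule.span F (Set.range W) : Set (Fin R → F)) =
      {v | ∃ lam : Polynomial F, lam.degree < (d : ℕ) ∧ v = fun i => lam.eval (α i)}) :
    (∀ g : Polynomial F, g ≠ 0 → g.degree < (k : ℕ) →
      d ≤ (V * Matrix.diagonal (fun i => g.eval (α i)) * Wᵀ).rank) ∧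
    (∀ C' : Submodule F (Matrix (Fin k) (Fin d) F),
      (C' : Set (Matrix (Fin k) (Fin d) F)) =
        {M | ∃ g : Polynomial F, g.degree < (k : ℕ) ∧
          M = V * Matrix.diagonal (fun i => g.eval (α i)) * Wᵀ} →
      Module.finrank F C' = k ∧ minRankDist C' = d ∧ trkCode C' = k + d - 1) :=
  cauchy_MTR_construction_general hd hdk hR α hα f hf hfdeg V hVrank hV W hWrank hW
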